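/- arXiv:math-ph/0606061 — 3 statements merged into one kernel-verified Lean document; each statement's English description precedes it below -/
import Mathlib

section
/- Let T be a symmetric positive semidefinite n×n real matrix and λ ≥ 0. Then the maximal dimension of a λ⁻-space of T equals the number of eigenvalues of T (with multiplicity) that are ≤ λ, and the maximal dimension of a λ⁺-space of T equals the number of eigenvalues of T (with multiplicity) that are > λ. -/
/-- The set of dimensions of `λ⁻`-spaces of a matrix `T` (Euclidean norm). -/
def lamMinusDims {ι : Type} [Fintype ι] [DecidableEq ι]
    (T : Matrix ι ι ℝ) (lam : ℝ) : Set ℕ :=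
  {m | ∃ L : Submodule ℝ (EuclideanSpace ℝ ι),
        (∀ v ∈ L, ‖Matrix.toEuclideanLin T v‖ ≤ lam * ‖v‖) ∧ Module.finrank ℝ L = m}

/-- The set of dimensions of `λ⁺`-spaces of a matrix `T` (Euclidean norm). -/
def lamPlusDims {ι : Type} [Fintype ι] [DecidableEq ι]
    (T : Matrix ι ι ℝ) (lam : ℝ) : Set ℕ :=
  {m | ∃ N : Submodule ℝ (EuclideanSpace ℝ ι),
        (∀ v ∈ N, v ≠ 0 → lam * ‖v‖ < ‖Matrix.toEuclideanLin T v‖) ∧ Module.finrank ℝ N = m}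

section Aux

variable {n : ℕ} {T : Matrix (Fin n) (Fin n) ℝ}

/-- Action of `T` on an eigenbasis vector. -/
lemma aux_apply_eigenvectorBasis (hT : T.IsHermitian) (j : Fin n) :
    Matrix.toEuclideanLin T (hT.eigenvectorBasis j) =
      hT.eigenvalues j • hT.eigenvectorBasis j := by
  have h := hT.mulVec_eigenvectorBasis j
  ext i
  have := congrFun h i
  simpa [Matrix.toEuclideanLin_apply] using this

/-- Coordinates of `T v` in the eigenbasis. -/
lemma aux_repr_apply (hT : T.IsHermitian) (v : EuclideanSpace ℝ (Fin n)) (i : Fin n) :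
    hT.eigenvectorBasis.repr (Matrix.toEuclideanLin T v) i =
      hT.eigenvalues i * hT.eigenvectorBasis.repr v i := by
  have hs := (Matrix.isHermitian_iff_isSymmetric).mp hT
  rw [OrthonormalBasis.repr_apply_apply, OrthonormalBasis.repr_apply_apply,
    ← hs (hT.eigenvectorBasis i) v, aux_apply_eigenvectorBasis hT i,
    real_inner_smul_left]

lemma aux_norm_sq (B : OrthonormalBasis (Fin n) ℝ (EuclideanSpace ℝ (Fin n)))
    (x : EuclideanSpace ℝ (Fin n)) : ‖x‖ ^ 2 = ∑ i, (B.repr x i) ^ 2 := by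
  rw [← B.repr.norm_map x, EuclideanSpace.norm_eq, Real.sq_sqrt (by positivity)]
  simp [sq_abs]

lemma aux_coord_zero (hT : T.IsHermitian) (S : Finset (Fin n))
    (v : EuclideanSpace ℝ (Fin n))
    (hv : v ∈ Submodule.span ℝ (hT.eigenvectorBasis '' S)) (i : Fin n) (hi : i ∉ S) :
    hT.eigenvectorBasis.repr v i = 0 := by
  set B := hT.eigenvectorBasis
  induction hv using Submodule.span_induction with
  | mem x hx =>
    obtain ⟨j, hj, rfl⟩ := hx
    rw [B.repr_self j, EuclideanSpace.single_apply]
    simp only [ite_eq_right_iff]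
    intro h; exact absurd (h ▸ hj) hi
  | zero => simp
  | add x y hx hy ihx ihy => simp [map_add, PiLp.add_apply, ihx, ihy]
  | smul a x hx ih => simp [map_smul, PiLp.smul_apply, ih]

lemma aux_finrank_span (hT : T.IsHermitian) (S : Finset (Fin n)) :
    Module.finrank ℝ (Submodule.span ℝ (hT.eigenvectorBasis '' S)) = S.card := by
  classical
  set B := hT.eigenvectorBasis
  have hinj : Function.Injective B := B.toBasis.injective
  have : (B '' ↑S) = ↑(S.image B) := by simp [Finset.coe_image]
  rw [this, finrank_span_finset_eq_card, Finset.card_image_of_injective _ hinj]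
  exact ((linearIndepOn_id_range_iff B.toBasis.injective).mpr B.toBasis.linearIndependent).mono (fun x hx => by
    obtain ⟨j, _, rfl⟩ := Finset.mem_image.mp hx; exact ⟨j, by simp⟩)

end Aux

/-- for a symmetric positive semidefinite matrix `T` and `λ ≥ 0`, the maximal
dimension of a `λ⁻`-space of `T` is the number of eigenvalues (with multiplicity) `≤ λ`,
and the maximal dimension of a `λ⁺`-space is the number of eigenvalues `> λ`. -/
theorem maximal_lamMinus_lamPlus_dims (n : ℕ) (T : Matrix (Fin n) (Fin n) ℝ)
    (hT : T.PosSemidef) (lam : ℝ) (hlam : 0 ≤ lam) :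
    IsGreatest (lamMinusDims T lam)
      (Finset.univ.filter fun i => hT.isHermitian.eigenvalues i ≤ lam).card ∧
    IsGreatest (lamPlusDims T lam)
      (Finset.univ.filter fun i => lam < hT.isHermitian.eigenvalues i).card := by
  classical
  set hH := hT.isHermitian
  set B := hH.eigenvectorBasis with hB
  set μ := hH.eigenvalues with hμ
  set f := Matrix.toEuclideanLin T with hf
  set Sle : Finset (Fin n) := Finset.univ.filter fun i => μ i ≤ lam with hSle
  set Sgt : Finset (Fin n) := Finset.univ.filter fun i => lam < μ i with hSgt
  have hμ0 : ∀ i, 0 ≤ μ i := hT.eigenvalues_nonneg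
  have hcard : Sle.card + Sgt.card = n := by
    have := Finset.card_filter_add_card_filter_not
      (s := (Finset.univ : Finset (Fin n))) (p := fun i => μ i ≤ lam)
    simp only [Finset.card_univ, Fintype.card_fin] at this
    rw [hSle, hSgt]
    convert this using 3
    simp [not_le]
  -- the candidate subspaces
  set L₀ : Submodule ℝ (EuclideanSpace ℝ (Fin n)) := Submodule.span ℝ (B '' Sle) with hL₀
  set N₀ : Submodule ℝ (EuclideanSpace ℝ (Fin n)) := Submodule.span ℝ (B '' Sgt) with hN₀
  -- L₀ is a lam⁻ space
  have hL₀prop : ∀ v ∈ L₀, ‖f v‖ ≤ lam * ‖v‖ := by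
    intro v hv
    have hsq : ‖f v‖ ^ 2 ≤ (lam * ‖v‖) ^ 2 := by
      rw [mul_pow, aux_norm_sq B (f v), aux_norm_sq B v, Finset.mul_sum]
      apply Finset.sum_le_sum
      intro i _
      by_cases hi : i ∈ Sle
      · rw [aux_repr_apply hH v i, mul_pow]
        have hμle : μ i ≤ lam := by simpa [hSle] using hi
        have : μ i ^ 2 ≤ lam ^ 2 := by nlinarith [hμ0 i]
        nlinarith [sq_nonneg (B.repr v i)]
      · rw [aux_repr_apply hH v i, aux_coord_zero hH Sle v hv i hi]
        simp [sq_nonneg]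
    have h1 : 0 ≤ lam * ‖v‖ := by positivity
    nlinarith [norm_nonneg (f v)]
  -- N₀ is a lam⁺ space
  have hN₀prop : ∀ v ∈ N₀, v ≠ 0 → lam * ‖v‖ < ‖f v‖ := by
    intro v hv hv0
    have hsq : (lam * ‖v‖) ^ 2 < ‖f v‖ ^ 2 := by
      rw [mul_pow, aux_norm_sq B (f v), aux_norm_sq B v, Finset.mul_sum]
      have hterm : ∀ i ∈ (Finset.univ : Finset (Fin n)),
          lam ^ 2 * (B.repr v i) ^ 2 ≤ (B.repr (f v) i) ^ 2 := by
        intro i _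
        by_cases hi : i ∈ Sgt
        · rw [aux_repr_apply hH v i, mul_pow]
          have hμgt : lam < μ i := by simpa [hSgt] using hi
          have : lam ^ 2 ≤ μ i ^ 2 := by nlinarith
          nlinarith [sq_nonneg (B.repr v i)]
        · rw [aux_repr_apply hH v i, aux_coord_zero hH Sgt v hv i hi]
          simp [sq_nonneg]
      -- strict at some index
      obtain ⟨j, hj⟩ : ∃ j, B.repr v j ≠ 0 := by
        by_contra h
        push_neg at h
        apply hv0
        have : B.repr v = 0 := by ext i; exact h i
        simpa using congrArg B.repr.symm this
      have hjS : j ∈ Sgt := by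
        by_contra hjS
        exact hj (aux_coord_zero hH Sgt v hv j hjS)
      apply Finset.sum_lt_sum hterm
      refine ⟨j, Finset.mem_univ j, ?_⟩
      rw [aux_repr_apply hH v j, mul_pow]
      have hμgt : lam < μ j := by simpa [hSgt] using hjS
      have h2 : lam ^ 2 < μ j ^ 2 := by nlinarith
      have h3 : 0 < (B.repr v j) ^ 2 := by positivity
      nlinarith
    have h1 : 0 ≤ lam * ‖v‖ := by positivity
    nlinarith [norm_nonneg (f v)]
  have hL₀rank : Module.finrank ℝ L₀ = Sle.card := aux_finrank_span hH Sle
  have hN₀rank : Module.finrank ℝ N₀ = Sgt.card := aux_finrank_span hH Sgt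
  -- generic upper bound: any lam⁻ space and lam⁺ space intersect trivially
  have hdisj : ∀ (L N : Submodule ℝ (EuclideanSpace ℝ (Fin n))),
      (∀ v ∈ L, ‖f v‖ ≤ lam * ‖v‖) → (∀ v ∈ N, v ≠ 0 → lam * ‖v‖ < ‖f v‖) →
      Module.finrank ℝ L + Module.finrank ℝ N ≤ n := by
    intro L N hL hN
    have hinf : L ⊓ N = ⊥ := by
      rw [Submodule.eq_bot_iff]
      intro v hv
      by_contra hv0
      exact absurd (hL v hv.1) (not_le.mpr (hN v hv.2 hv0))
    have := Submodule.finrank_sup_add_finrank_inf_eq L N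
    rw [hinf] at this
    simp only [finrank_bot, add_zero] at this
    rw [← this]
    calc Module.finrank ℝ ↥(L ⊔ N) ≤ Module.finrank ℝ (EuclideanSpace ℝ (Fin n)) :=
          Submodule.finrank_le _
      _ = n := finrank_euclideanSpace_fin
  constructor
  · constructor
    · exact ⟨L₀, hL₀prop, hL₀rank⟩
    · rintro m ⟨L, hL, rfl⟩
      have := hdisj L N₀ hL hN₀prop
      rw [hN₀rank] at this
      omega
  · constructor
    · exact ⟨N₀, hN₀prop, hN₀rank⟩
    · rintro m ⟨N, hN, rfl⟩
      have := hdisj L₀ N hL₀prop hN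
      rw [hL₀rank] at this
      omega
end

section
/- Let T and S be n×n real matrices with rank(T − S) ≤ ε·n for some ε ≥ 0. Then for every λ ≥ 0, |σ_T(λ) − σ_S(λ)| ≤ ε and |σ̃_T(λ) − σ̃_S(λ)| ≤ ε, where σ_T(λ) denotes the maximal dimension of a λ⁻-space of T divided by n, and σ̃_T(λ) the maximal dimension of a λ⁺-space of T divided by n. -/
open Module Matrix

theorem aux_ker_rank (n : ℕ) (M : Matrix (Fin n) (Fin n) ℝ) :
    finrank ℝ (LinearMap.ker (Matrix.toEuclideanLin M)) + M.rank = n := by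
  have h1 : LinearMap.ker (Matrix.toEuclideanLin M) =
      (LinearMap.ker M.mulVecLin).map
        ((WithLp.linearEquiv 2 ℝ (Fin n → ℝ)).symm : (Fin n → ℝ) →ₗ[ℝ] _) := by
    ext v
    simp [LinearMap.mem_ker, Submodule.mem_map, Matrix.toEuclideanLin_apply,
      ← WithLp.toLp_zero, (WithLp.equiv 2 (Fin n → ℝ)).symm.injective.eq_iff]
  rw [h1, Matrix.rank,
    LinearEquiv.finrank_map_eq (WithLp.linearEquiv 2 ℝ (Fin n → ℝ)).symm]
  have := LinearMap.finrank_range_add_finrank_ker M.mulVecLin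
  simp only [Module.finrank_pi, Fintype.card_fin] at this
  omega

theorem aux_rank_neg (n : ℕ) (M : Matrix (Fin n) (Fin n) ℝ) : (-M).rank = M.rank := by
  have : (-M).mulVecLin = -M.mulVecLin := by
    ext v
    simp [Matrix.neg_mulVec]
  rw [Matrix.rank, Matrix.rank, this, LinearMap.range_neg]

/-- Key inf-with-kernel step for λ⁻-spaces. -/
theorem aux_minus_step (n : ℕ) (T S : Matrix (Fin n) (Fin n) ℝ) (lam : ℝ)
    {m : ℕ} (hm : m ∈ lamMinusDims T lam) :
    ∃ m' ∈ lamMinusDims S lam, m ≤ m' + (T - S).rank := by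
  obtain ⟨L, hL, hLm⟩ := hm
  set K := LinearMap.ker (Matrix.toEuclideanLin (T - S)) with hK
  refine ⟨finrank ℝ ↥(L ⊓ K), ⟨L ⊓ K, ?_, rfl⟩, ?_⟩
  · intro v hv
    have hvK : Matrix.toEuclideanLin (T - S) v = 0 := hv.2
    have hTS : Matrix.toEuclideanLin S v = Matrix.toEuclideanLin T v := by
      rw [map_sub] at hvK
      have : Matrix.toEuclideanLin T v - Matrix.toEuclideanLin S v = 0 := hvK
      rw [sub_eq_zero] at this
      exact this.symm
    rw [hTS]
    exact hL v hv.1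
  · have h1 := Submodule.finrank_sup_add_finrank_inf_eq L K
    have h2 : finrank ℝ ↥(L ⊔ K) ≤ n := by
      have := Submodule.finrank_le (L ⊔ K)
      simpa [finrank_euclideanSpace, Fintype.card_fin] using this
    have h3 := aux_ker_rank n (T - S)
    rw [← hK] at h3
    omega

/-- Key inf-with-kernel step for λ⁺-spaces. -/
theorem aux_plus_step (n : ℕ) (T S : Matrix (Fin n) (Fin n) ℝ) (lam : ℝ)
    {m : ℕ} (hm : m ∈ lamPlusDims T lam) :
    ∃ m' ∈ lamPlusDims S lam, m ≤ m' + (T - S).rank := by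
  obtain ⟨L, hL, hLm⟩ := hm
  set K := LinearMap.ker (Matrix.toEuclideanLin (T - S)) with hK
  refine ⟨finrank ℝ ↥(L ⊓ K), ⟨L ⊓ K, ?_, rfl⟩, ?_⟩
  · intro v hv hv0
    have hvK : Matrix.toEuclideanLin (T - S) v = 0 := hv.2
    have hTS : Matrix.toEuclideanLin S v = Matrix.toEuclideanLin T v := by
      rw [map_sub] at hvK
      have : Matrix.toEuclideanLin T v - Matrix.toEuclideanLin S v = 0 := hvK
      rw [sub_eq_zero] at this
      exact this.symm
    rw [hTS]
    exact hL v hv.1 hv0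
  · have h1 := Submodule.finrank_sup_add_finrank_inf_eq L K
    have h2 : finrank ℝ ↥(L ⊔ K) ≤ n := by
      have := Submodule.finrank_le (L ⊔ K)
      simpa [finrank_euclideanSpace, Fintype.card_fin] using this
    have h3 := aux_ker_rank n (T - S)
    rw [← hK] at h3
    omega

theorem aux_greatest {s : Set ℕ} (h0 : 0 ∈ s) (hb : ∀ m ∈ s, m ≤ n) :
    IsGreatest s (sSup s) := by
  have hbdd : BddAbove s := ⟨n, fun m hm => hb m hm⟩
  exact ⟨Nat.sSup_mem ⟨0, h0⟩ hbdd, fun m hm => le_csSup hbdd hm⟩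

theorem aux_minus_zero (n : ℕ) (T : Matrix (Fin n) (Fin n) ℝ) (lam : ℝ) :
    (0 : ℕ) ∈ lamMinusDims T lam := by
  refine ⟨⊥, fun v hv => ?_, finrank_bot ℝ _⟩
  rw [Submodule.mem_bot] at hv
  simp [hv]

theorem aux_plus_zero (n : ℕ) (T : Matrix (Fin n) (Fin n) ℝ) (lam : ℝ) :
    (0 : ℕ) ∈ lamPlusDims T lam := by
  refine ⟨⊥, fun v hv hv0 => ?_, finrank_bot ℝ _⟩
  rw [Submodule.mem_bot] at hv
  exact absurd hv hv0

theorem aux_minus_le (n : ℕ) (T : Matrix (Fin n) (Fin n) ℝ) (lam : ℝ) :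
    ∀ m ∈ lamMinusDims T lam, m ≤ n := by
  rintro m ⟨L, -, rfl⟩
  simpa [finrank_euclideanSpace, Fintype.card_fin] using Submodule.finrank_le L

theorem aux_plus_le (n : ℕ) (T : Matrix (Fin n) (Fin n) ℝ) (lam : ℝ) :
    ∀ m ∈ lamPlusDims T lam, m ≤ n := by
  rintro m ⟨L, -, rfl⟩
  simpa [finrank_euclideanSpace, Fintype.card_fin] using Submodule.finrank_le L

theorem aux_abs (n : ℕ) (hn : 0 < n) (ε : ℝ) (r mT mS : ℕ)
    (hr : (r : ℝ) ≤ ε * n) (h1 : mT ≤ mS + r) (h2 : mS ≤ mT + r) :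
    |(mT : ℝ) / n - (mS : ℝ) / n| ≤ ε := by
  have hn' : (0 : ℝ) < n := by exact_mod_cast hn
  rw [div_sub_div_same, abs_div, abs_of_pos hn', div_le_iff₀ hn']
  have : |(mT : ℝ) - mS| ≤ r := by
    rw [abs_sub_le_iff]
    constructor <;> [skip; skip] <;>
      · push_cast
        linarith [(by exact_mod_cast h1 : (mT : ℝ) ≤ mS + r),
          (by exact_mod_cast h2 : (mS : ℝ) ≤ mT + r)]
  linarith

/-- if `rank (T - S) ≤ ε n`, then for every `λ ≥ 0` the normalized maximal
dimensions of `λ⁻`-spaces of `T` and of `S` differ by at most `ε`, and likewise for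
`λ⁺`-spaces. -/
theorem sigma_rank_comparison (n : ℕ) (hn : 0 < n) (ε : ℝ) (hε : 0 ≤ ε)
    (T S : Matrix (Fin n) (Fin n) ℝ) (hrank : ((T - S).rank : ℝ) ≤ ε * n)
    (lam : ℝ) (hlam : 0 ≤ lam) :
    ∃ mT mS m'T m'S : ℕ,
      IsGreatest (lamMinusDims T lam) mT ∧
      IsGreatest (lamMinusDims S lam) mS ∧
      |(mT : ℝ) / n - (mS : ℝ) / n| ≤ ε ∧
      IsGreatest (lamPlusDims T lam) m'T ∧
      IsGreatest (lamPlusDims S lam) m'S ∧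
      |(m'T : ℝ) / n - (m'S : ℝ) / n| ≤ ε := by
  have hST : (S - T).rank = (T - S).rank := by
    rw [(neg_sub T S).symm, aux_rank_neg]
  have hTm := aux_greatest (aux_minus_zero n T lam) (aux_minus_le n T lam)
  have hSm := aux_greatest (aux_minus_zero n S lam) (aux_minus_le n S lam)
  have hTp := aux_greatest (aux_plus_zero n T lam) (aux_plus_le n T lam)
  have hSp := aux_greatest (aux_plus_zero n S lam) (aux_plus_le n S lam)
  refine ⟨_, _, _, _, hTm, hSm, ?_, hTp, hSp, ?_⟩
  · obtain ⟨m', hm', hle⟩ := aux_minus_step n T S lam hTm.1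
    obtain ⟨m'', hm'', hle'⟩ := aux_minus_step n S T lam hSm.1
    rw [hST] at hle'
    exact aux_abs n hn ε _ _ _ hrank (hle.trans (by gcongr; exact hSm.2 hm'))
      (hle'.trans (by gcongr; exact hTm.2 hm''))
  · obtain ⟨m', hm', hle⟩ := aux_plus_step n T S lam hTp.1
    obtain ⟨m'', hm'', hle'⟩ := aux_plus_step n S T lam hSp.1
    rw [hST] at hle'
    exact aux_abs n hn ε _ _ _ hrank (hle.trans (by gcongr; exact hSp.2 hm'))
      (hle'.trans (by gcongr; exact hTp.2 hm''))
end

section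
/- If A and B are symmetric positive semidefinite n×n real matrices with rank(A − B)/n ≤ ε, then for every λ ≥ 0, |N_A(λ) − N_B(λ)| ≤ ε. -/
open Matrix Module Submodule Finset
open scoped RealInnerProductSpace

section Aux

variable {n : ℕ}

private lemma inner_repr_sum (u : OrthonormalBasis (Fin n) ℝ (EuclideanSpace ℝ (Fin n)))
    (x y : EuclideanSpace ℝ (Fin n)) : ⟪x, y⟫ = ∑ i, u.repr x i * u.repr y i := by
  have h := (u.repr.inner_map_map x y).symm
  simpa only [PiLp.inner_apply, RCLike.inner_apply, conj_trivial, mul_comm] using h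

private lemma repr_toEuclideanLin (A : Matrix (Fin n) (Fin n) ℝ) (hA : A.IsHermitian)
    (x : EuclideanSpace ℝ (Fin n)) (i : Fin n) :
    hA.eigenvectorBasis.repr (Matrix.toEuclideanLin A x) i
      = hA.eigenvalues i * hA.eigenvectorBasis.repr x i := by
  have hsym := Matrix.isHermitian_iff_isSymmetric.1 hA
  have happ : Matrix.toEuclideanLin A (hA.eigenvectorBasis i)
      = hA.eigenvalues i • hA.eigenvectorBasis i := by
    ext j
    have := congrFun (hA.mulVec_eigenvectorBasis i) j
    simpa [Matrix.toEuclideanLin_apply] using this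
  rw [OrthonormalBasis.repr_apply_apply, OrthonormalBasis.repr_apply_apply,
    ← hsym (hA.eigenvectorBasis i) x, happ, inner_smul_left]
  simp

private lemma quad_repr (A : Matrix (Fin n) (Fin n) ℝ) (hA : A.IsHermitian)
    (x : EuclideanSpace ℝ (Fin n)) :
    ⟪x, Matrix.toEuclideanLin A x⟫
      = ∑ i, hA.eigenvalues i * (hA.eigenvectorBasis.repr x i) ^ 2 := by
  rw [inner_repr_sum hA.eigenvectorBasis]
  refine Finset.sum_congr rfl fun i _ => ?_
  rw [repr_toEuclideanLin A hA x i]; ring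

private lemma repr_zero_of_mem_span (u : OrthonormalBasis (Fin n) ℝ (EuclideanSpace ℝ (Fin n)))
    (S : Finset (Fin n)) (x : EuclideanSpace ℝ (Fin n))
    (hx : x ∈ span ℝ (u '' S)) {i : Fin n} (hi : i ∉ S) : u.repr x i = 0 := by
  induction hx using Submodule.span_induction with
  | mem y hy =>
    obtain ⟨j, hj, rfl⟩ := hy
    rw [u.repr_self]
    simp only [EuclideanSpace.single_apply]
    exact if_neg (by rintro rfl; exact hi hj)
  | zero => simp
  | add y z _ _ hy hz => rw [map_add]; simp [hy, hz]
  | smul c y _ hy => rw [LinearIsometryEquiv.map_smul]; simp [hy]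

private lemma finrank_span_ob (u : OrthonormalBasis (Fin n) ℝ (EuclideanSpace ℝ (Fin n)))
    (S : Finset (Fin n)) :
    finrank ℝ (span ℝ (u '' S) : Submodule ℝ (EuclideanSpace ℝ (Fin n))) = S.card := by
  have h : (u '' S : Set (EuclideanSpace ℝ (Fin n))) = Set.range (fun j : S => u j) := by
    ext v; simp [Set.range, Subtype.exists]
  have hli : LinearIndependent ℝ (fun j : S => u j) :=
    (u.orthonormal.linearIndependent).comp _ Subtype.val_injective
  rw [h, finrank_span_eq_card hli]
  simp

private lemma finrank_range_toEuclideanLin (M : Matrix (Fin n) (Fin n) ℝ) :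
    finrank ℝ (LinearMap.range (Matrix.toEuclideanLin M)) = M.rank := by
  have h : Matrix.toEuclideanLin M =
      (((WithLp.linearEquiv 2 ℝ (Fin n → ℝ)).symm.toLinearMap.comp M.mulVecLin).comp
        (WithLp.linearEquiv 2 ℝ (Fin n → ℝ)).toLinearMap) := by
    ext x; rfl
  rw [h, LinearMap.range_comp, LinearEquiv.range, Submodule.map_top, LinearMap.range_comp,
    LinearEquiv.finrank_map_eq, Matrix.rank]

private lemma matrix_rank_neg (M : Matrix (Fin n) (Fin n) ℝ) : (-M).rank = M.rank := by
  have h : (-M).mulVecLin = -(M.mulVecLin) := by ext x; simp [Matrix.neg_mulVec]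
  rw [Matrix.rank, Matrix.rank, h, LinearMap.range_neg]

private lemma count_le_count_add_rank (A B : Matrix (Fin n) (Fin n) ℝ)
    (hA : A.IsHermitian) (hB : B.IsHermitian) (lam : ℝ) :
    (Finset.univ.filter fun i => hB.eigenvalues i ≤ lam).card ≤
      (Finset.univ.filter fun i => hA.eigenvalues i ≤ lam).card + (A - B).rank := by
  classical
  by_contra hcon
  push_neg at hcon
  set SA := Finset.univ.filter fun i => hA.eigenvalues i ≤ lam with hSA
  set SB := Finset.univ.filter fun i => hB.eigenvalues i ≤ lam with hSB
  set uA := hA.eigenvectorBasis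
  set uB := hB.eigenvectorBasis
  set r := (A - B).rank with hr
  set V : Submodule ℝ (EuclideanSpace ℝ (Fin n)) := span ℝ (uB '' SB) with hVdef
  set K : Submodule ℝ (EuclideanSpace ℝ (Fin n)) :=
    LinearMap.ker (Matrix.toEuclideanLin (A - B)) with hKdef
  have hV : finrank ℝ V = SB.card := finrank_span_ob uB SB
  have hK : r + finrank ℝ K = n := by
    have := LinearMap.finrank_range_add_finrank_ker (Matrix.toEuclideanLin (A - B))
    rwa [finrank_range_toEuclideanLin, finrank_euclideanSpace, Fintype.card_fin] at this
  have hsupVK := Submodule.finrank_sup_add_finrank_inf_eq V K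
  have hleVK : finrank ℝ ↥(V ⊔ K) ≤ n := by
    have := Submodule.finrank_le (V ⊔ K)
    rwa [finrank_euclideanSpace, Fintype.card_fin] at this
  set W := V ⊓ K with hWdef
  have hW : SA.card < finrank ℝ W := by omega
  set U : Submodule ℝ (EuclideanSpace ℝ (Fin n)) := span ℝ (uA '' (SAᶜ : Finset (Fin n))) with hUdef
  have hU : finrank ℝ U = n - SA.card := by
    rw [finrank_span_ob uA SAᶜ, Finset.card_compl, Fintype.card_fin]
  have hSAle : SA.card ≤ n := by
    have := Finset.card_le_univ SA; simpa using this
  have hsupWU := Submodule.finrank_sup_add_finrank_inf_eq W U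
  have hleWU : finrank ℝ ↥(W ⊔ U) ≤ n := by
    have := Submodule.finrank_le (W ⊔ U)
    rwa [finrank_euclideanSpace, Fintype.card_fin] at this
  have hpos : 0 < finrank ℝ ↥(W ⊓ U) := by omega
  have hne : W ⊓ U ≠ ⊥ := by
    intro h
    rw [h, finrank_bot] at hpos
    exact lt_irrefl 0 hpos
  obtain ⟨x, hx, hx0⟩ := Submodule.exists_mem_ne_zero_of_ne_bot hne
  obtain ⟨⟨hxV, hxK⟩, hxU⟩ := hx
  -- A and B agree on x
  have hAB : Matrix.toEuclideanLin A x = Matrix.toEuclideanLin B x := by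
    have h0 : Matrix.toEuclideanLin (A - B) x = 0 := hxK
    rw [map_sub] at h0
    exact sub_eq_zero.mp h0
  -- quadratic form bound from B
  have hquadB : ⟪x, Matrix.toEuclideanLin B x⟫ ≤ lam * ⟪x, x⟫ := by
    rw [quad_repr B hB x, inner_repr_sum uB x x, Finset.mul_sum]
    refine Finset.sum_le_sum fun i _ => ?_
    by_cases hi : i ∈ SB
    · have : hB.eigenvalues i ≤ lam := by
        simpa [hSB] using hi
      have h2 : (uB.repr x i) ^ 2 = uB.repr x i * uB.repr x i := sq (uB.repr x i) ▸ rfl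
      calc hB.eigenvalues i * (uB.repr x i) ^ 2 ≤ lam * (uB.repr x i) ^ 2 :=
            mul_le_mul_of_nonneg_right this (sq_nonneg _)
        _ = lam * (uB.repr x i * uB.repr x i) := by ring
    · rw [repr_zero_of_mem_span uB SB x hxV hi]; ring_nf; exact le_refl 0
  -- quadratic form strict bound from A
  have hquadA : lam * ⟪x, x⟫ < ⟪x, Matrix.toEuclideanLin A x⟫ := by
    rw [quad_repr A hA x, inner_repr_sum uA x x, Finset.mul_sum]
    have key : ∀ i, i ∉ SAᶜ → uA.repr x i = 0 := fun i hi =>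
      repr_zero_of_mem_span uA (SAᶜ : Finset (Fin n)) x hxU hi
    have hlt : ∀ i ∈ SAᶜ, lam < hA.eigenvalues i := by
      intro i hi
      rw [Finset.mem_compl, hSA, Finset.mem_filter] at hi
      push_neg at hi
      exact hi (Finset.mem_univ i)
    have hex : ∃ i ∈ Finset.univ, 0 < hA.eigenvalues i * (uA.repr x i) ^ 2
        - lam * (uA.repr x i * uA.repr x i) := by
      have hrepr : uA.repr x ≠ 0 := fun h => hx0 (by simpa using uA.repr.map_eq_zero_iff.mp h)
      obtain ⟨i, hi⟩ : ∃ i, uA.repr x i ≠ 0 := by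
        by_contra h
        push_neg at h
        exact hrepr (PiLp.ext fun i => h i)
      refine ⟨i, Finset.mem_univ i, ?_⟩
      have hiS : i ∈ SAᶜ := by
        by_contra hcon2
        exact hi (key i hcon2)
      have h1 : lam < hA.eigenvalues i := hlt i hiS
      have h2 : 0 < (uA.repr x i) ^ 2 :=
        lt_of_le_of_ne (sq_nonneg _) (Ne.symm (pow_ne_zero 2 hi))
      nlinarith [sq_nonneg (uA.repr x i)]
    have hnn : ∀ i ∈ Finset.univ, 0 ≤ hA.eigenvalues i * (uA.repr x i) ^ 2
        - lam * (uA.repr x i * uA.repr x i) := by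
      intro i _
      by_cases hi : i ∈ SAᶜ
      · have := hlt i hi
        nlinarith [sq_nonneg (uA.repr x i)]
      · rw [key i hi]; ring_nf; exact le_refl 0
    have hsum : 0 < ∑ i, (hA.eigenvalues i * (uA.repr x i) ^ 2
        - lam * (uA.repr x i * uA.repr x i)) := by
      obtain ⟨i, hi, hipos⟩ := hex
      exact Finset.sum_pos' hnn ⟨i, hi, hipos⟩
    rw [Finset.sum_sub_distrib] at hsum
    linarith
  rw [hAB] at hquadA
  linarith

end Aux

/-- if `A` and `B` are symmetric positive semidefinite `n × n` real matrices
with `rank (A - B) / n ≤ ε`, then for every `λ ≥ 0`, `|N_A(λ) - N_B(λ)| ≤ ε`, where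
`N_A(λ)` is the number of eigenvalues of `A` (with multiplicity) that are `≤ λ`,
divided by `n`. -/
theorem eigenvalue_counting_rank_comparison (n : ℕ) (hn : 0 < n) (ε : ℝ)
    (A B : Matrix (Fin n) (Fin n) ℝ) (hA : A.PosSemidef) (hB : B.PosSemidef)
    (hrank : ((A - B).rank : ℝ) / n ≤ ε) (lam : ℝ) (hlam : 0 ≤ lam) :
    |((Finset.univ.filter fun i => hA.isHermitian.eigenvalues i ≤ lam).card : ℝ) / n -
      ((Finset.univ.filter fun i => hB.isHermitian.eigenvalues i ≤ lam).card : ℝ) / n| ≤ ε := by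
  have h1 := count_le_count_add_rank A B hA.isHermitian hB.isHermitian lam
  have h2 := count_le_count_add_rank B A hB.isHermitian hA.isHermitian lam
  have hr : (B - A).rank = (A - B).rank := by
    rw [← neg_sub A B, matrix_rank_neg]
  rw [hr] at h2
  set a := (Finset.univ.filter fun i => hA.isHermitian.eigenvalues i ≤ lam).card
  set b := (Finset.univ.filter fun i => hB.isHermitian.eigenvalues i ≤ lam).card
  set r := (A - B).rank
  have habs : |(a : ℝ) - b| ≤ r := by
    rw [abs_sub_le_iff]
    constructor
    · have : (a : ℝ) ≤ b + r := by exact_mod_cast h2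
      linarith
    · have : (b : ℝ) ≤ a + r := by exact_mod_cast h1
      linarith
  have hn' : (0 : ℝ) < n := by exact_mod_cast hn
  calc |(a : ℝ) / n - (b : ℝ) / n| = |(a : ℝ) - b| / n := by
        rw [← sub_div, abs_div, abs_of_pos hn']
    _ ≤ (r : ℝ) / n := by gcongr
    _ ≤ ε := hrank
end
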